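/- Let I, I' be finite sets, α ∈ I, α' ∈ I' with I∖{α} = I'∖{α'}, and let T, T' be finite nonempty, cyclically closed, covering sets of ordered triples of elements of I, I' respectively; assume moreover that some triple of T has α as its first entry and its other two entries in I∖{α}, and similarly some triple of T' has α' as its first entry and its other two entries in I'∖{α'}. Let 0 < ρ₀ ≤ ρ₁ and fix x : I → ℝ and x' : I' → ℝ with x_{ijk} ≥ 2ρ₀ for all (i,j,k) ∈ T and x'_{ijk} ≥ 2ρ₀ for all (i,j,k) ∈ T'. Then there exists C ≥ 0 such that for all y : I → ℝ and y' : I' → ℝ with y(i) = y'(i) for every i ∈ I∖{α}, with y_{ijk} ≥ 2ρ₀ for all (i,j,k) ∈ T and y'_{ijk} ≥ 2ρ₀ for all (i,j,k) ∈ T', and such that y_{i₀j₀k₀} ≤ 2ρ₁ for some triple of T and y'_{i₁j₁k₁} ≤ 2ρ₁ for some triple of T', one has |D_T(x,y) − D_{T'}(x',y')| ≤ C. (Abstract form of the proposition that a sphere about a fixed center for d_h^Γ is, up to an additive constant depending on the center, a sphere for d_h^{Γ'} when the preferred triangulation Γ' is obtained from Γ by a diagonal-flip replacing the arc α by α'.)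 -/
import Mathlib


/-- The combination `x_{ijk} = x(i) − x(j) + x(k)` of a triple. -/
def tricomb {V : Type*} (x : V → ℝ) (p : V × V × V) : ℝ :=
  x p.1 - x p.2.1 + x p.2.2

/-- The abstract Hilbert distance in Hamenstädt coordinates:
`D_T(x,y) = (1/2)·max_{(i,j,k)∈T} log(y_{ijk}/x_{ijk}) + (1/2)·max_{(i,j,k)∈T} log(x_{ijk}/y_{ijk})`. -/
noncomputable def DT {V : Type*} (T : Finset (V × V × V)) (hT : T.Nonempty)
    (x y : V → ℝ) : ℝ :=
  (1 / 2) * (T.sup' hT fun p => Real.log (tricomb y p / tricomb x p)) +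
  (1 / 2) * (T.sup' hT fun p => Real.log (tricomb x p / tricomb y p))

/-- Every value `y i`, `i ∈ I`, is at least `2ρ₀`, by cyclic closedness and covering. -/
lemma yval_ge {V : Type*} (I : Finset V)
    (T : Finset (V × V × V))
    (hcyc : ∀ i j k : V, (i, j, k) ∈ T → (j, k, i) ∈ T)
    (hcov : ∀ i ∈ I, ∃ j k : V, (i, j, k) ∈ T)
    (ρ₀ : ℝ) (y : V → ℝ)
    (hy : ∀ p ∈ T, 2 * ρ₀ ≤ tricomb y p) :
    ∀ i ∈ I, 2 * ρ₀ ≤ y i := by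
  intro i hi
  obtain ⟨j, k, hp⟩ := hcov i hi
  have h1 : 2 * ρ₀ ≤ y i - y j + y k := hy _ hp
  have h2 : 2 * ρ₀ ≤ y j - y k + y i := hy _ (hcyc _ _ _ hp)
  linarith

/-- Two-sided estimate for `DT` in terms of the sup of `y` over `I.erase α`. -/
lemma side_est {V : Type*} [DecidableEq V]
    (I : Finset V) (α : V)
    (T : Finset (V × V × V)) (hT : T.Nonempty)
    (hTmem : ∀ p ∈ T, p.1 ∈ I ∧ p.2.1 ∈ I ∧ p.2.2 ∈ I)
    (hcyc : ∀ i j k : V, (i, j, k) ∈ T → (j, k, i) ∈ T)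
    (hcov : ∀ i ∈ I, ∃ j k : V, (i, j, k) ∈ T)
    (hflip : ∃ j k : V, j ∈ I.erase α ∧ k ∈ I.erase α ∧ (α, j, k) ∈ T)
    (hne : (I.erase α).Nonempty)
    (ρ₀ ρ₁ : ℝ) (hρ₀ : 0 < ρ₀) (hρ₁ : ρ₀ ≤ ρ₁)
    (x : V → ℝ) (hx : ∀ p ∈ T, 2 * ρ₀ ≤ tricomb x p)
    (y : V → ℝ) (hy : ∀ p ∈ T, 2 * ρ₀ ≤ tricomb y p)
    (hy1 : ∃ p ∈ T, tricomb y p ≤ 2 * ρ₁) :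
    Real.log ((I.erase α).sup' hne y) / 2 - Real.log (T.sup' hT (tricomb x)) / 2
      + (Real.log ρ₀ - Real.log ρ₁) / 2 ≤ DT T hT x y ∧
    DT T hT x y ≤ Real.log ((I.erase α).sup' hne y) / 2 + Real.log 4 / 2
      + (Real.log (T.sup' hT (tricomb x)) - 2 * Real.log (2 * ρ₀)) / 2 := by
  obtain ⟨p₀, hp₀T, hp₀⟩ := hy1
  have hρ₀2 : (0:ℝ) < 2 * ρ₀ := by linarith
  have hyI : ∀ i ∈ I, 2 * ρ₀ ≤ y i := yval_ge I T hcyc hcov ρ₀ y hy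
  have hypos : ∀ p ∈ T, 0 < tricomb y p := fun p hp => lt_of_lt_of_le hρ₀2 (hy p hp)
  have hxpos : ∀ p ∈ T, 0 < tricomb x p := fun p hp => lt_of_lt_of_le hρ₀2 (hx p hp)
  set M := T.sup' hT (tricomb y) with hMdef
  set X := T.sup' hT (tricomb x) with hXdef
  set N := (I.erase α).sup' hne y with hNdef
  have hMge : ∀ p ∈ T, tricomb y p ≤ M := fun p hp => Finset.le_sup' _ hp
  have hXge : ∀ p ∈ T, tricomb x p ≤ X := fun p hp => Finset.le_sup' _ hp
  have hM2 : 2 * ρ₀ ≤ M := le_trans (hy _ hT.choose_spec) (hMge _ hT.choose_spec)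
  have hX2 : 2 * ρ₀ ≤ X := le_trans (hx _ hT.choose_spec) (hXge _ hT.choose_spec)
  have hMpos : 0 < M := lt_of_lt_of_le hρ₀2 hM2
  have hXpos : 0 < X := lt_of_lt_of_le hρ₀2 hX2
  have hN2 : 2 * ρ₀ ≤ N :=
    le_trans (hyI _ (Finset.mem_of_mem_erase hne.choose_spec))
      (Finset.le_sup' _ hne.choose_spec)
  have hNpos : 0 < N := lt_of_lt_of_le hρ₀2 hN2
  -- bound y α
  obtain ⟨j', k', hj', hk', hf⟩ := hflip
  have hαb : y α ≤ 2 * N := by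
    have h := hy _ (hcyc _ _ _ (hcyc _ _ _ hf))
    have h' : 2 * ρ₀ ≤ y k' - y α + y j' := h
    have hj'' : y j' ≤ N := Finset.le_sup' _ hj'
    have hk'' : y k' ≤ N := Finset.le_sup' _ hk'
    linarith
  have hiB : ∀ i ∈ I, y i ≤ 2 * N := by
    intro i hi
    by_cases h : i = α
    · subst h; exact hαb
    · have : y i ≤ N := Finset.le_sup' _ (Finset.mem_erase.2 ⟨h, hi⟩)
      linarith
  have hMN : M ≤ 4 * N := by
    apply Finset.sup'_le
    intro p hp
    obtain ⟨h1, h2, h3⟩ := hTmem p hp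
    have e1 := hyI _ h2
    have e2 := hiB _ h1
    have e3 := hiB _ h3
    show y p.1 - y p.2.1 + y p.2.2 ≤ 4 * N
    linarith
  have hNM : N ≤ M := by
    apply Finset.sup'_le
    intro i hi
    obtain ⟨j, k, hp⟩ := hcov i (Finset.mem_of_mem_erase hi)
    have h1 : y i - y j + y k ≤ M := hMge _ hp
    have h2 : y j - y k + y i ≤ M := hMge _ (hcyc _ _ _ hp)
    linarith
  -- log comparisons
  have hlogMN : Real.log N ≤ Real.log M := Real.log_le_log hNpos hNM
  have hlogMN4 : Real.log M ≤ Real.log 4 + Real.log N := by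
    have : Real.log M ≤ Real.log (4 * N) := Real.log_le_log hMpos hMN
    rwa [Real.log_mul (by norm_num) (ne_of_gt hNpos)] at this
  -- the two sups of logs
  set A := T.sup' hT fun p => Real.log (tricomb y p / tricomb x p) with hAdef
  set B := T.sup' hT fun p => Real.log (tricomb x p / tricomb y p) with hBdef
  have hA_ub : A ≤ Real.log M - Real.log (2 * ρ₀) := by
    apply Finset.sup'_le
    intro p hp
    rw [Real.log_div (ne_of_gt (hypos p hp)) (ne_of_gt (hxpos p hp))]
    have l1 : Real.log (tricomb y p) ≤ Real.log M := Real.log_le_log (hypos p hp) (hMge p hp)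
    have l2 : Real.log (2 * ρ₀) ≤ Real.log (tricomb x p) := Real.log_le_log hρ₀2 (hx p hp)
    linarith
  have hA_lb : Real.log M - Real.log X ≤ A := by
    obtain ⟨q, hq, hMeq⟩ := Finset.exists_mem_eq_sup' hT (tricomb y)
    have l1 : Real.log (tricomb y q / tricomb x q) ≤ A :=
      Finset.le_sup' (fun p => Real.log (tricomb y p / tricomb x p)) hq
    rw [Real.log_div (ne_of_gt (hypos q hq)) (ne_of_gt (hxpos q hq))] at l1
    have l2 : Real.log (tricomb x q) ≤ Real.log X := Real.log_le_log (hxpos q hq) (hXge q hq)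
    rw [← hMdef] at hMeq
    rw [← hMeq] at l1
    linarith
  have hB_ub : B ≤ Real.log X - Real.log (2 * ρ₀) := by
    apply Finset.sup'_le
    intro p hp
    rw [Real.log_div (ne_of_gt (hxpos p hp)) (ne_of_gt (hypos p hp))]
    have l1 : Real.log (tricomb x p) ≤ Real.log X := Real.log_le_log (hxpos p hp) (hXge p hp)
    have l2 : Real.log (2 * ρ₀) ≤ Real.log (tricomb y p) := Real.log_le_log hρ₀2 (hy p hp)
    linarith
  have hB_lb : Real.log (2 * ρ₀) - Real.log (2 * ρ₁) ≤ B := by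
    have l1 : Real.log (tricomb x p₀ / tricomb y p₀) ≤ B :=
      Finset.le_sup' (fun p => Real.log (tricomb x p / tricomb y p)) hp₀T
    rw [Real.log_div (ne_of_gt (hxpos p₀ hp₀T)) (ne_of_gt (hypos p₀ hp₀T))] at l1
    have l2 : Real.log (2 * ρ₀) ≤ Real.log (tricomb x p₀) := Real.log_le_log hρ₀2 (hx p₀ hp₀T)
    have l3 : Real.log (tricomb y p₀) ≤ Real.log (2 * ρ₁) := Real.log_le_log (hypos p₀ hp₀T) hp₀
    linarith
  have e₀ : Real.log (2 * ρ₀) = Real.log 2 + Real.log ρ₀ :=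
    Real.log_mul (by norm_num) (ne_of_gt hρ₀)
  have e₁ : Real.log (2 * ρ₁) = Real.log 2 + Real.log ρ₁ :=
    Real.log_mul (by norm_num) (by linarith)
  have hDT : DT T hT x y = (1 / 2) * A + (1 / 2) * B := rfl
  rw [hDT]
  constructor <;> linarith

/-- Abstract form of the proposition that a sphere about a fixed center for `d_h^Γ` is,
up to an additive constant depending on the center, a sphere for `d_h^{Γ'}` when `Γ'`
is obtained from `Γ` by a diagonal-flip replacing the arc `α` by `α'`. -/
theorem stmt14 {V : Type*} [DecidableEq V]
    (I I' : Finset V) (α α' : V) (hα : α ∈ I) (hα' : α' ∈ I')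
    (hII' : I.erase α = I'.erase α')
    (T T' : Finset (V × V × V)) (hT : T.Nonempty) (hT' : T'.Nonempty)
    (hTmem : ∀ p ∈ T, p.1 ∈ I ∧ p.2.1 ∈ I ∧ p.2.2 ∈ I)
    (hTmem' : ∀ p ∈ T', p.1 ∈ I' ∧ p.2.1 ∈ I' ∧ p.2.2 ∈ I')
    (hcyc : ∀ i j k : V, (i, j, k) ∈ T → (j, k, i) ∈ T)
    (hcyc' : ∀ i j k : V, (i, j, k) ∈ T' → (j, k, i) ∈ T')
    (hcov : ∀ i ∈ I, ∃ j k : V, (i, j, k) ∈ T)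
    (hcov' : ∀ i ∈ I', ∃ j k : V, (i, j, k) ∈ T')
    (hflip : ∃ j k : V, j ∈ I.erase α ∧ k ∈ I.erase α ∧ (α, j, k) ∈ T)
    (hflip' : ∃ j k : V, j ∈ I'.erase α' ∧ k ∈ I'.erase α' ∧ (α', j, k) ∈ T')
    (ρ₀ ρ₁ : ℝ) (hρ₀ : 0 < ρ₀) (hρ₁ : ρ₀ ≤ ρ₁)
    (x x' : V → ℝ)
    (hx : ∀ p ∈ T, 2 * ρ₀ ≤ tricomb x p)
    (hx' : ∀ p ∈ T', 2 * ρ₀ ≤ tricomb x' p) :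
    ∃ C : ℝ, 0 ≤ C ∧ ∀ y y' : V → ℝ,
      (∀ i ∈ I.erase α, y i = y' i) →
      (∀ p ∈ T, 2 * ρ₀ ≤ tricomb y p) →
      (∀ p ∈ T', 2 * ρ₀ ≤ tricomb y' p) →
      (∃ p ∈ T, tricomb y p ≤ 2 * ρ₁) →
      (∃ p ∈ T', tricomb y' p ≤ 2 * ρ₁) →
      |DT T hT x y - DT T' hT' x' y'| ≤ C := by
  have hρ₀2 : (0:ℝ) < 2 * ρ₀ := by linarith
  have hne : (I.erase α).Nonempty := ⟨hflip.choose, hflip.choose_spec.choose_spec.1⟩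
  have hne' : (I'.erase α').Nonempty := hII' ▸ hne
  set X := T.sup' hT (tricomb x) with hXdef
  set X' := T'.sup' hT' (tricomb x') with hX'def
  have hX2 : 2 * ρ₀ ≤ X := le_trans (hx _ hT.choose_spec) (Finset.le_sup' _ hT.choose_spec)
  have hX'2 : 2 * ρ₀ ≤ X' := le_trans (hx' _ hT'.choose_spec) (Finset.le_sup' _ hT'.choose_spec)
  have hlogX : Real.log (2 * ρ₀) ≤ Real.log X := Real.log_le_log hρ₀2 hX2
  have hlogX' : Real.log (2 * ρ₀) ≤ Real.log X' := Real.log_le_log hρ₀2 hX'2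
  have hlogρ : Real.log ρ₀ ≤ Real.log ρ₁ := Real.log_le_log hρ₀ hρ₁
  have hlog4 : (0:ℝ) ≤ Real.log 4 := Real.log_nonneg (by norm_num)
  refine ⟨Real.log 4 / 2 + Real.log X / 2 + Real.log X' / 2 - Real.log (2 * ρ₀)
    + (Real.log ρ₁ - Real.log ρ₀) / 2, by linarith, ?_⟩
  intro y y' hyy' hy hy' hy1 hy1'
  have hNeq : (I.erase α).sup' hne y = (I'.erase α').sup' hne' y' :=
    Finset.sup'_congr hne hII' hyy'
  obtain ⟨hL, hU⟩ := side_est I α T hT hTmem hcyc hcov hflip hne ρ₀ ρ₁ hρ₀ hρ₁ x hx y hy hy1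
  obtain ⟨hL', hU'⟩ :=
    side_est I' α' T' hT' hTmem' hcyc' hcov' hflip' hne' ρ₀ ρ₁ hρ₀ hρ₁ x' hx' y' hy' hy1'
  rw [← hNeq] at hL' hU'
  rw [abs_sub_le_iff]
  constructor <;> linarith
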